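/- Let Ω be a countable totally ordered set without least or greatest element, and let M = {g ∈ Sym(Ω) : αg ≥ α for all α ∈ Ω}. Then M is a submonoid of Sym(Ω) and Sym(Ω) = M·M⁻¹·M. -/
import Mathlib
set_option linter.unusedSectionVars false


open Pointwise

namespace Stmt17Aux

variable {Ω : Type*} [LinearOrder Ω]

section helpers

variable [NoMaxOrder Ω] [NoMinOrder Ω]

lemma exists_ge_notin (c : Ω) {T : Set Ω} (hT : T.Finite) : ∃ b, c ≤ b ∧ b ∉ T := by
  obtain ⟨b, hb⟩ := ((Set.Ici_infinite c).diff hT).nonempty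
  exact ⟨b, hb.1, hb.2⟩

lemma exists_le_notin (c : Ω) {T : Set Ω} (hT : T.Finite) : ∃ b, b ≤ c ∧ b ∉ T := by
  obtain ⟨b, hb⟩ := ((Set.Iic_infinite c).diff hT).nonempty
  exact ⟨b, hb.1, hb.2⟩

end helpers

lemma funinj_insert {R : Set (Ω × Ω)} {x b : Ω}
    (hfun : ∀ p ∈ R, ∀ q ∈ R, p.1 = q.1 → p.2 = q.2)
    (hx : ¬ ∃ c, (x, c) ∈ R) :
    ∀ p ∈ insert (x, b) R, ∀ q ∈ insert (x, b) R, p.1 = q.1 → p.2 = q.2 := by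
  rintro p hp q hq h
  rcases Set.mem_insert_iff.mp hp with rfl | hp <;>
    rcases Set.mem_insert_iff.mp hq with rfl | hq
  · rfl
  · exact absurd ⟨q.2, by rw [show x = q.1 from h]; exact hq⟩ hx
  · exact absurd ⟨p.2, by rw [show x = p.1 from h.symm]; exact hp⟩ hx
  · exact hfun p hp q hq h

lemma funinj_insert' {R : Set (Ω × Ω)} {x b : Ω}
    (hinj : ∀ p ∈ R, ∀ q ∈ R, p.2 = q.2 → p.1 = q.1)
    (hb : ¬ ∃ c, (c, b) ∈ R) :
    ∀ p ∈ insert (x, b) R, ∀ q ∈ insert (x, b) R, p.2 = q.2 → p.1 = q.1 := by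
  rintro p hp q hq h
  rcases Set.mem_insert_iff.mp hp with rfl | hp <;>
    rcases Set.mem_insert_iff.mp hq with rfl | hq
  · rfl
  · exact absurd ⟨q.1, by rw [show b = q.2 from h]; exact hq⟩ hb
  · exact absurd ⟨p.1, by rw [show b = p.2 from h.symm]; exact hp⟩ hb
  · exact hinj p hp q hq h

lemma notmem_snd {R : Set (Ω × Ω)} {b : Ω} (h : b ∉ Prod.snd '' R) : ¬ ∃ c, (c, b) ∈ R := by
  rintro ⟨c, hc⟩; exact h ⟨(c, b), hc, rfl⟩

lemma notmem_fst {R : Set (Ω × Ω)} {x : Ω} (h : x ∉ Prod.fst '' R) : ¬ ∃ c, (x, c) ∈ R := by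
  rintro ⟨c, hc⟩; exact h ⟨(x, c), hc, rfl⟩

/-- A state of the back-and-forth construction: two finite partial bijections
`G` (the graph of `g`) and `K` (the graph of `k`), with all the invariants. -/
structure St (f : Equiv.Perm Ω) where
  G : Set (Ω × Ω)
  K : Set (Ω × Ω)
  Gfin : G.Finite
  Kfin : K.Finite
  Gfun : ∀ p ∈ G, ∀ q ∈ G, p.1 = q.1 → p.2 = q.2
  Ginj : ∀ p ∈ G, ∀ q ∈ G, p.2 = q.2 → p.1 = q.1
  Kfun : ∀ p ∈ K, ∀ q ∈ K, p.1 = q.1 → p.2 = q.2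
  Kinj : ∀ p ∈ K, ∀ q ∈ K, p.2 = q.2 → p.1 = q.1
  Gle : ∀ p ∈ G, p.1 ≤ p.2
  Kle : ∀ p ∈ K, p.1 ≤ p.2
  compat : ∀ p ∈ K, ∀ q ∈ G, q.2 = f p.1 → q.1 ≤ p.2
  closed : ∀ p ∈ K, ∃ c, (c, f p.1) ∈ G

variable [NoMaxOrder Ω] [NoMinOrder Ω] (f : Equiv.Perm Ω)

/-- Extend so that `x` is in the domain of `G`. -/
lemma extend_domG (S : St f) (x : Ω) :
    ∃ S' : St f, S.G ⊆ S'.G ∧ S.K = S'.K ∧ ∃ b, (x, b) ∈ S'.G := by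
  by_cases hx : ∃ b, (x, b) ∈ S.G
  · exact ⟨S, subset_rfl, rfl, hx⟩
  obtain ⟨b, hxb, hbR⟩ := exists_ge_notin x (S.Gfin.image Prod.snd)
  have hbR' := notmem_snd hbR
  refine ⟨⟨insert (x, b) S.G, S.K, S.Gfin.insert _, S.Kfin,
    funinj_insert S.Gfun hx, funinj_insert' S.Ginj hbR', S.Kfun, S.Kinj, ?_, S.Kle, ?_, ?_⟩,
    Set.subset_insert _ _, rfl, b, Set.mem_insert _ _⟩
  · rintro p hp
    rcases Set.mem_insert_iff.mp hp with rfl | hp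
    · exact hxb
    · exact S.Gle p hp
  · rintro p hp q hq hq2
    rcases Set.mem_insert_iff.mp hq with rfl | hq
    · exfalso
      obtain ⟨c, hc⟩ := S.closed p hp
      exact hbR' ⟨c, by rw [show b = f p.1 from hq2]; exact hc⟩
    · exact S.compat p hp q hq hq2
  · intro p hp
    obtain ⟨c, hc⟩ := S.closed p hp
    exact ⟨c, Set.mem_insert_of_mem _ hc⟩

/-- Extend so that `y` is in the range of `G`. -/
lemma extend_ranG (S : St f) (y : Ω) :
    ∃ S' : St f, S.G ⊆ S'.G ∧ S.K = S'.K ∧ ∃ a, (a, y) ∈ S'.G := by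
  by_cases hy : ∃ a, (a, y) ∈ S.G
  · exact ⟨S, subset_rfl, rfl, hy⟩
  -- the bound we must stay below: `y`, and `k (f.symm y)` if defined
  obtain ⟨c, hcy, hcK⟩ : ∃ c, c ≤ y ∧ ∀ b, (f.symm y, b) ∈ S.K → c ≤ b := by
    by_cases hK : ∃ b, (f.symm y, b) ∈ S.K
    · obtain ⟨b0, hb0⟩ := hK
      refine ⟨min y b0, min_le_left _ _, fun b hb => ?_⟩
      have : b0 = b := S.Kfun _ hb0 _ hb rfl
      rw [← this]; exact min_le_right _ _
    · exact ⟨y, le_refl _, fun b hb => absurd ⟨b, hb⟩ hK⟩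
  obtain ⟨a, hac, haD⟩ := exists_le_notin c (S.Gfin.image Prod.fst)
  have haD' := notmem_fst haD
  refine ⟨⟨insert (a, y) S.G, S.K, S.Gfin.insert _, S.Kfin,
    funinj_insert S.Gfun haD', funinj_insert' S.Ginj hy, S.Kfun, S.Kinj, ?_, S.Kle, ?_, ?_⟩,
    Set.subset_insert _ _, rfl, a, Set.mem_insert _ _⟩
  · rintro p hp
    rcases Set.mem_insert_iff.mp hp with rfl | hp
    · exact le_trans hac hcy
    · exact S.Gle p hp
  · rintro p hp q hq hq2
    rcases Set.mem_insert_iff.mp hq with rfl | hq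
    · -- new pair (a, y) with y = f p.1, so p.1 = f.symm y and p ∈ K
      have hp1 : p.1 = f.symm y := by
        simp only at hq2
        rw [hq2]; simp
      have : (f.symm y, p.2) ∈ S.K := by rw [← hp1]; exact hp
      exact le_trans hac (hcK _ this)
    · exact S.compat p hp q hq hq2
  · intro p hp
    obtain ⟨d, hd⟩ := S.closed p hp
    exact ⟨d, Set.mem_insert_of_mem _ hd⟩

/-- Extend so that `x` is in the domain of `K`. -/
lemma extend_domK (S : St f) (x : Ω) :
    ∃ S' : St f, S.G ⊆ S'.G ∧ S.K ⊆ S'.K ∧ ∃ b, (x, b) ∈ S'.K := by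
  by_cases hx : ∃ b, (x, b) ∈ S.K
  · exact ⟨S, subset_rfl, subset_rfl, hx⟩
  obtain ⟨S1, hG1, hK1, a0, ha0⟩ := extend_ranG f S (f x)
  have hx1 : ¬ ∃ b, (x, b) ∈ S1.K := by rw [← hK1]; exact hx
  obtain ⟨b, hb, hbR⟩ := exists_ge_notin (max x a0) (S1.Kfin.image Prod.snd)
  have hbR' := notmem_snd hbR
  refine ⟨⟨S1.G, insert (x, b) S1.K, S1.Gfin, S1.Kfin.insert _,
    S1.Gfun, S1.Ginj, funinj_insert S1.Kfun hx1, funinj_insert' S1.Kinj hbR',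
    S1.Gle, ?_, ?_, ?_⟩, hG1, by rw [hK1]; exact Set.subset_insert _ _, b, Set.mem_insert _ _⟩
  · rintro p hp
    rcases Set.mem_insert_iff.mp hp with rfl | hp
    · exact le_trans (le_max_left _ _) hb
    · exact S1.Kle p hp
  · rintro p hp q hq hq2
    rcases Set.mem_insert_iff.mp hp with rfl | hp
    · -- p = (x, b); q ∈ G with q.2 = f x, so q.1 = a0
      have : q.1 = a0 := S1.Ginj q hq (a0, f x) ha0 hq2
      rw [this]; exact le_trans (le_max_right _ _) hb
    · exact S1.compat p hp q hq hq2
  · rintro p hp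
    rcases Set.mem_insert_iff.mp hp with rfl | hp
    · exact ⟨a0, ha0⟩
    · exact S1.closed p hp

/-- Extend so that `y` is in the range of `K`. -/
lemma extend_ranK (S : St f) (y : Ω) :
    ∃ S' : St f, S.G ⊆ S'.G ∧ S.K ⊆ S'.K ∧ ∃ a, (a, y) ∈ S'.K := by
  by_cases hy : ∃ a, (a, y) ∈ S.K
  · exact ⟨S, subset_rfl, subset_rfl, hy⟩
  -- choose a ≤ y with a ∉ dom K and f a ∉ ran G
  obtain ⟨a, hay, haT⟩ := exists_le_notin y
    ((S.Kfin.image Prod.fst).union ((S.Gfin.image Prod.snd).image f.symm))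
  have haK : ¬ ∃ b, (a, b) ∈ S.K := notmem_fst (fun h => haT (Set.mem_union_left _ h))
  have hfaG : ¬ ∃ c, (c, f a) ∈ S.G := by
    rintro ⟨c, hc⟩
    exact haT (Set.mem_union_right _ ⟨f a, ⟨(c, f a), hc, rfl⟩, by simp⟩)
  -- choose a0 ≤ min y (f a), a0 ∉ dom G
  obtain ⟨a0, ha0le, ha0D⟩ := exists_le_notin (min y (f a)) (S.Gfin.image Prod.fst)
  have ha0D' := notmem_fst ha0D
  -- first extend G by (a0, f a)
  have hGfun := funinj_insert (x := a0) (b := f a) S.Gfun ha0D'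
  have hGinj := funinj_insert' (x := a0) (b := f a) S.Ginj hfaG
  refine ⟨⟨insert (a0, f a) S.G, insert (a, y) S.K, S.Gfin.insert _, S.Kfin.insert _,
    hGfun, hGinj, funinj_insert S.Kfun haK, funinj_insert' S.Kinj hy,
    ?_, ?_, ?_, ?_⟩, Set.subset_insert _ _, Set.subset_insert _ _, a, Set.mem_insert _ _⟩
  · rintro p hp
    rcases Set.mem_insert_iff.mp hp with rfl | hp
    · exact le_trans ha0le (min_le_right _ _)
    · exact S.Gle p hp
  · rintro p hp
    rcases Set.mem_insert_iff.mp hp with rfl | hp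
    · exact hay
    · exact S.Kle p hp
  · rintro p hp q hq hq2
    rcases Set.mem_insert_iff.mp hp with rfl | hp <;>
      rcases Set.mem_insert_iff.mp hq with rfl | hq
    · -- p = (a, y), q = (a0, f a)
      exact le_trans ha0le (min_le_left _ _)
    · -- p = (a, y), q ∈ old G with q.2 = f a : contradiction
      exact absurd ⟨q.1, by rw [← hq2]; exact hq⟩ hfaG
    · -- p ∈ old K, q = (a0, f a) with f a = f p.1 → p.1 = a → a ∈ dom K contra
      have : a = p.1 := f.injective hq2
      exact absurd ⟨p.2, by rw [this]; exact hp⟩ haK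
    · exact S.compat p hp q hq hq2
  · rintro p hp
    rcases Set.mem_insert_iff.mp hp with rfl | hp
    · exact ⟨a0, Set.mem_insert _ _⟩
    · obtain ⟨c, hc⟩ := S.closed p hp
      exact ⟨c, Set.mem_insert_of_mem _ hc⟩

lemma extend_all (S : St f) (x : Ω) :
    ∃ S' : St f, S.G ⊆ S'.G ∧ S.K ⊆ S'.K ∧
      (∃ b, (x, b) ∈ S'.G) ∧ (∃ a, (a, x) ∈ S'.G) ∧
      (∃ b, (x, b) ∈ S'.K) ∧ (∃ a, (a, x) ∈ S'.K) := by
  obtain ⟨S1, hG1, hK1, b1, hb1⟩ := extend_domG f S x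
  obtain ⟨S2, hG2, hK2, a2, ha2⟩ := extend_ranG f S1 x
  obtain ⟨S3, hG3, hK3, b3, hb3⟩ := extend_domK f S2 x
  obtain ⟨S4, hG4, hK4, a4, ha4⟩ := extend_ranK f S3 x
  exact ⟨S4, (hG1.trans hG2).trans (hG3.trans hG4),
    (hK1 ▸ hK2 ▸ hK3.trans hK4 : S.K ⊆ S4.K),
    ⟨b1, hG4 (hG3 (hG2 hb1))⟩, ⟨a2, hG4 (hG3 ha2)⟩, ⟨b3, hK4 hb3⟩, ⟨a4, ha4⟩⟩

variable [Countable Ω] [Infinite Ω]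

lemma master : ∃ g k : Equiv.Perm Ω,
    (∀ a, a ≤ g a) ∧ (∀ a, a ≤ k a) ∧ ∀ a, g.symm (f a) ≤ k a := by
  obtain ⟨e, he⟩ := exists_surjective_nat Ω
  choose st hstG hstK hst1 hst2 hst3 hst4 using extend_all f
  let S0 : St f := ⟨∅, ∅, Set.finite_empty, Set.finite_empty,
    by simp, by simp, by simp, by simp, by simp, by simp, by simp, by simp⟩
  let ch : ℕ → St f := fun n => Nat.rec S0 (fun n S => st S (e n)) n
  have chsucc : ∀ n, ch (n + 1) = st (ch n) (e n) := fun n => rfl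
  have chmonoG : ∀ m n, m ≤ n → (ch m).G ⊆ (ch n).G := by
    intro m n hmn
    induction n, hmn using Nat.le_induction with
    | base => exact subset_rfl
    | succ n hmn ih => exact ih.trans (by rw [chsucc]; exact hstG _ _)
  have chmonoK : ∀ m n, m ≤ n → (ch m).K ⊆ (ch n).K := by
    intro m n hmn
    induction n, hmn using Nat.le_induction with
    | base => exact subset_rfl
    | succ n hmn ih => exact ih.trans (by rw [chsucc]; exact hstK _ _)
  -- global uniqueness
  have Gfun' : ∀ {x b b' : Ω} {n m : ℕ}, (x, b) ∈ (ch n).G → (x, b') ∈ (ch m).G → b = b' := by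
    intro x b b' n m hn hm
    exact (ch (max n m)).Gfun (x, b) (chmonoG n _ (le_max_left _ _) hn)
      (x, b') (chmonoG m _ (le_max_right _ _) hm) rfl
  have Ginj' : ∀ {x x' b : Ω} {n m : ℕ}, (x, b) ∈ (ch n).G → (x', b) ∈ (ch m).G → x = x' := by
    intro x x' b n m hn hm
    exact (ch (max n m)).Ginj (x, b) (chmonoG n _ (le_max_left _ _) hn)
      (x', b) (chmonoG m _ (le_max_right _ _) hm) rfl
  have Kfun' : ∀ {x b b' : Ω} {n m : ℕ}, (x, b) ∈ (ch n).K → (x, b') ∈ (ch m).K → b = b' := by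
    intro x b b' n m hn hm
    exact (ch (max n m)).Kfun (x, b) (chmonoK n _ (le_max_left _ _) hn)
      (x, b') (chmonoK m _ (le_max_right _ _) hm) rfl
  have Kinj' : ∀ {x x' b : Ω} {n m : ℕ}, (x, b) ∈ (ch n).K → (x', b) ∈ (ch m).K → x = x' := by
    intro x x' b n m hn hm
    exact (ch (max n m)).Kinj (x, b) (chmonoK n _ (le_max_left _ _) hn)
      (x', b) (chmonoK m _ (le_max_right _ _) hm) rfl
  -- totality
  have totG : ∀ x, ∃ b n, (x, b) ∈ (ch n).G := by
    intro x
    obtain ⟨m, rfl⟩ := he x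
    obtain ⟨b, hb⟩ := hst1 (ch m) (e m)
    exact ⟨b, m + 1, by rw [chsucc]; exact hb⟩
  have totG' : ∀ y, ∃ a n, (a, y) ∈ (ch n).G := by
    intro y
    obtain ⟨m, rfl⟩ := he y
    obtain ⟨a, ha⟩ := hst2 (ch m) (e m)
    exact ⟨a, m + 1, by rw [chsucc]; exact ha⟩
  have totK : ∀ x, ∃ b n, (x, b) ∈ (ch n).K := by
    intro x
    obtain ⟨m, rfl⟩ := he x
    obtain ⟨b, hb⟩ := hst3 (ch m) (e m)
    exact ⟨b, m + 1, by rw [chsucc]; exact hb⟩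
  have totK' : ∀ y, ∃ a n, (a, y) ∈ (ch n).K := by
    intro y
    obtain ⟨m, rfl⟩ := he y
    obtain ⟨a, ha⟩ := hst4 (ch m) (e m)
    exact ⟨a, m + 1, by rw [chsucc]; exact ha⟩
  choose gf ng hgf using totG
  choose kf nk hkf using totK
  have gbij : Function.Bijective gf := by
    constructor
    · intro x y hxy
      have h2 : (y, gf x) ∈ (ch (ng y)).G := by rw [hxy]; exact hgf y
      exact Ginj' (hgf x) h2
    · intro y
      obtain ⟨a, n, ha⟩ := totG' y
      exact ⟨a, Gfun' (hgf a) ha⟩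
  have kbij : Function.Bijective kf := by
    constructor
    · intro x y hxy
      have h2 : (y, kf x) ∈ (ch (nk y)).K := by rw [hxy]; exact hkf y
      exact Kinj' (hkf x) h2
    · intro y
      obtain ⟨a, n, ha⟩ := totK' y
      exact ⟨a, Kfun' (hkf a) ha⟩
  let g : Equiv.Perm Ω := Equiv.ofBijective gf gbij
  let k : Equiv.Perm Ω := Equiv.ofBijective kf kbij
  refine ⟨g, k, ?_, ?_, ?_⟩
  · intro a
    exact (ch (ng a)).Gle _ (hgf a)
  · intro a
    exact (ch (nk a)).Kle _ (hkf a)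
  · intro a
    set c := g.symm (f a) with hc
    have hgc : gf c = f a := by
      show g c = f a
      rw [hc, Equiv.apply_symm_apply]
    have hcG : (c, f a) ∈ (ch (ng c)).G := by rw [← hgc]; exact hgf c
    have hK : (a, kf a) ∈ (ch (nk a)).K := hkf a
    have := (ch (max (ng c) (nk a))).compat (a, kf a)
      (chmonoK _ _ (le_max_right _ _) hK) (c, f a)
      (chmonoG _ _ (le_max_left _ _) hcG) rfl
    exact this
end Stmt17Aux

open Stmt17Aux in
theorem stmt17 {Ω : Type*} [LinearOrder Ω] [Countable Ω] [Infinite Ω]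
    [NoMaxOrder Ω] [NoMinOrder Ω]
    (M : Set (Equiv.Perm Ω)) (hM : M = {g : Equiv.Perm Ω | ∀ α : Ω, α ≤ g α}) :
    ((1 : Equiv.Perm Ω) ∈ M ∧ ∀ g ∈ M, ∀ h ∈ M, g * h ∈ M) ∧
      M * M⁻¹ * M = Set.univ := by
  subst hM
  constructor
  · constructor
    · intro α; rfl
    · intro g hg h hh α
      exact le_trans (hh α) (hg (h α))
  · ext f
    simp only [Set.mem_univ, iff_true]
    obtain ⟨g, k, hg, hk, hgk⟩ := master f
    have hgM : g ∈ {g : Equiv.Perm Ω | ∀ α : Ω, α ≤ g α} := hg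
    have hkM : k ∈ {g : Equiv.Perm Ω | ∀ α : Ω, α ≤ g α} := hk
    have hhM : (k * f⁻¹ * g) ∈ {g : Equiv.Perm Ω | ∀ α : Ω, α ≤ g α} := by
      intro x
      have : (k * f⁻¹ * g) x = k (f.symm (g x)) := rfl
      rw [this]
      have := hgk (f.symm (g x))
      rwa [Equiv.apply_symm_apply, Equiv.symm_apply_apply] at this
    have hhinv : (k * f⁻¹ * g)⁻¹ ∈ ({g : Equiv.Perm Ω | ∀ α : Ω, α ≤ g α})⁻¹ := by
      rw [Set.mem_inv, inv_inv]; exact hhM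
    have : f = g * (k * f⁻¹ * g)⁻¹ * k := by
      group
    rw [this]
    exact Set.mul_mem_mul (Set.mul_mem_mul hgM hhinv) hkM
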